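/- Let k be a field, X a connected scheme proper over k, x ∈ X(k), and C_X a Tannakian category of vector bundles on X with fiber functor at x. If E ∈ C_X and F is a vector bundle on X belonging to the saturation C̄_X with F a subobject of E in C̄_X (i.e., a subbundle with quotient in C̄_X), then F ∈ C_X. -/

import Mathlib

/-!
# Statement 13 (Subobjects of objects of `C_X` lying in the saturation belong to `C_X`)

Here `A` stands for the ambient abelian monoidal category of sheaves on a connected scheme
`X` proper over `k` (all objects appearing being vector bundles), `D : A → A` for the duality
`E ↦ E^∨`, and a `TannakianSub` for a Tannakian subcategory `C_X` of vector bundles on `X`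
with fibre functor at a rational point `x ∈ X(k)`.  `InSaturation C F` says that `F` belongs
to the saturation `C̄_X` (it admits a filtration with successive quotients in `C_X`).
The theorem: if `E ∈ C_X` and `F ∈ C̄_X` is a subobject of `E` in `C̄_X` (a subbundle with
quotient in `C̄_X`), then `F ∈ C_X`. -/

open CategoryTheory CategoryTheory.Limits MonoidalCategory

universe v u

/-- A Tannakian subcategory of vector bundles inside the ambient category `A`, given by a
membership predicate `mem`; `D` is the duality `E ↦ E^∨`. -/
structure TannakianSub (A : Type u) [Category.{v} A] [Abelian A] [MonoidalCategory A]
    (D : A → A) where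
  /-- membership in the Tannakian subcategory `C_X` -/
  mem : A → Prop
  mem_unit : mem (𝟙_ A)
  mem_of_iso : ∀ {X Y : A}, (X ≅ Y) → mem X → mem Y
  mem_tensor : ∀ {X Y : A}, mem X → mem Y → mem (X ⊗ Y)
  mem_dual : ∀ {X : A}, mem X → mem (D X)
  mem_kernel : ∀ {X Y : A} (f : X ⟶ Y), mem X → mem Y → mem (kernel f)
  mem_cokernel : ∀ {X Y : A} (f : X ⟶ Y), mem X → mem Y → mem (cokernel f)

/-- `E` lies in the saturation `C̄_X` of `C_X`: it admits a filtration
`0 = F₀ ↪ F₁ ↪ ⋯ ↪ Fₙ = E` with all successive quotients in `C_X`. -/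
def TannakianSub.InSaturation {A : Type u} [Category.{v} A] [Abelian A] [MonoidalCategory A]
    {D : A → A} (C : TannakianSub A D) (E : A) : Prop :=
  ∃ (n : ℕ) (F : Fin (n + 1) → A) (f : ∀ i : Fin n, F i.castSucc ⟶ F i.succ),
    IsZero (F 0) ∧ Nonempty (F (Fin.last n) ≅ E) ∧
      (∀ i, Mono (f i)) ∧ (∀ i, C.mem (cokernel (f i)))

/-!
Induct along the filtration `0 = F₀ ⊂ F₁ ⊂ ⋯ ⊂ Fₙ = F ⊂ E`. If `Fᵢ ∈ C_X`, then `E/Fᵢ ∈ C_X`;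
the cokernel of `Fᵢ₊₁/Fᵢ ⟶ E/Fᵢ` is `E/Fᵢ₊₁`, which therefore lies in `C_X`, and so does
`Fᵢ₊₁ = ker (E ⟶ E/Fᵢ₊₁)`.
-/

namespace CategoryTheory.ObjectProperty

variable {C : Type*} [Category* C] [Abelian C] (P : ObjectProperty C)

lemma prop_of_mono_of_prop_cokernel [P.IsClosedUnderKernels] {F E : C} (ι : F ⟶ E) [Mono ι]
    (hE : P E) (hQ : P (cokernel ι)) : P F :=
  P.prop_of_isLimit_kernelFork (Abelian.monoIsKernelOfCokernel _ (cokernelIsCokernel ι)) hE hQ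

/-- The exact sequence `coker f ⟶ coker (f ≫ g) ⟶ coker g ⟶ 0` exhibits `coker g` as a cokernel
of a morphism between the first two. -/
lemma prop_cokernel_of_prop_cokernel_comp [P.IsClosedUnderCokernels] {X Y Z : C}
    (f : X ⟶ Y) (g : Y ⟶ Z) (hf : P (cokernel f)) (hfg : P (cokernel (f ≫ g))) :
    P (cokernel g) :=
  (P.prop_of_isColimit_cokernelCofork
    ((kernelCokernelCompSequence_exact f g).exact 3).gIsCokernel hf hfg :)

lemma prop_of_mono_of_prop_cokernel_of_comp [P.IsClosedUnderKernels] [P.IsClosedUnderCokernels]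
    {G F E : C} (f : G ⟶ F) (ι : F ⟶ E) [Mono ι] (hG : P G) (hE : P E)
    (hf : P (cokernel f)) : P F :=
  P.prop_of_mono_of_prop_cokernel ι hE <|
    P.prop_cokernel_of_prop_cokernel_comp f ι hf (P.prop_cokernel (f ≫ ι) hG hE)

theorem prop_of_filtration_of_mono [P.ContainsZero] [P.IsClosedUnderIsomorphisms]
    [P.IsClosedUnderKernels] [P.IsClosedUnderCokernels] {n : ℕ} {F : Fin (n + 1) → C}
    (f : ∀ i : Fin n, F i.castSucc ⟶ F i.succ) (h₀ : IsZero (F 0)) (hmono : ∀ i, Mono (f i))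
    (hquot : ∀ i, P (cokernel (f i))) {E : C} (hE : P E) (ι : F (Fin.last n) ⟶ E) [Mono ι] :
    P (F (Fin.last n)) := by
  induction n with
  | zero => exact P.prop_of_isZero h₀
  | succ n ih =>
    have hprev : P (F (Fin.last n).castSucc) :=
      ih (F := fun i ↦ F i.castSucc) (fun i ↦ f i.castSucc) h₀ (fun i ↦ hmono _)
        (fun i ↦ hquot _) (f (Fin.last n) ≫ ι)
    exact P.prop_of_mono_of_prop_cokernel_of_comp (f (Fin.last n)) ι hprev hE (hquot _)

end CategoryTheory.ObjectProperty

namespace TannakianSub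

variable {A : Type u} [Category.{v} A] [Abelian A] [MonoidalCategory A] {D : A → A}
  (C : TannakianSub A D)

instance : ObjectProperty.IsClosedUnderIsomorphisms C.mem where
  of_iso e h := C.mem_of_iso e h

instance : ObjectProperty.IsClosedUnderKernels C.mem where
  kernels_le := by
    rintro _ ⟨f, k, hk, hX, hY⟩
    exact C.mem_of_iso (IsLimit.conePointUniqueUpToIso (kernelIsKernel f) hk)
      (C.mem_kernel f hX hY)

instance : ObjectProperty.IsClosedUnderCokernels C.mem where
  cokernels_le := by
    rintro _ ⟨f, k, hk, hX, hY⟩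
    exact C.mem_of_iso (IsColimit.coconePointUniqueUpToIso (cokernelIsCokernel f) hk)
      (C.mem_cokernel f hX hY)

instance : ObjectProperty.ContainsZero C.mem where
  exists_zero := ⟨kernel (𝟙 (𝟙_ A)), isZero_kernel_of_mono _,
    C.mem_kernel _ C.mem_unit C.mem_unit⟩

end TannakianSub

theorem mem_of_subobject_in_saturation_general
    {A : Type u} [Category.{v} A] [Abelian A] [MonoidalCategory A]
    {D : A → A} (C : TannakianSub A D) (E F : A) (hE : C.mem E)
    (ι : F ⟶ E) (hι : Mono ι)
    (hF : C.InSaturation F) :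
    C.mem F := by
  obtain ⟨n, G, g, h₀, ⟨e⟩, hmono, hquot⟩ := hF
  exact ObjectProperty.prop_of_iso C.mem e
    (ObjectProperty.prop_of_filtration_of_mono C.mem g h₀ hmono hquot hE (e.hom ≫ ι))

theorem mem_of_subobject_in_saturation
    {A : Type u} [Category.{v} A] [Abelian A] [MonoidalCategory A]
    {D : A → A} (C : TannakianSub A D) (E F : A) (hE : C.mem E)
    (ι : F ⟶ E) (hι : Mono ι)
    (hF : C.InSaturation F) (hQ : C.InSaturation (cokernel ι)) :
    C.mem F :=
  mem_of_subobject_in_saturation_general C E F hE ι hι hF
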